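/- Let n ≥ 3 and let π be an n-cycle lying in the grid class S^{++−} that is not unimodal. Then π has exactly two (+,+,−)-segmentations. -/
import Mathlib


/-- `(e1, e2)` is a `(+,+,-)`-segmentation `0 ≤ e1 ≤ e2 ≤ n` of `π` (positions
`0`-indexed): increasing on `[0,e1)`, increasing on `[e1,e2)`, decreasing on `[e2,n)`. -/
def SegPPM {n : ℕ} (π : Equiv.Perm (Fin n)) (e1 e2 : ℕ) : Prop :=
  e1 ≤ e2 ∧ e2 ≤ n ∧
  (∀ p q : Fin n, (p : ℕ) < (q : ℕ) → (q : ℕ) < e1 → π p < π q) ∧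
  (∀ p q : Fin n, e1 ≤ (p : ℕ) → (p : ℕ) < (q : ℕ) → (q : ℕ) < e2 → π p < π q) ∧
  (∀ p q : Fin n, e2 ≤ (p : ℕ) → (p : ℕ) < (q : ℕ) → π q < π p)

/-- `π` is unimodal: increasing then decreasing. -/
def IsUnimodal {n : ℕ} (π : Equiv.Perm (Fin n)) : Prop :=
  ∃ e : ℕ, e ≤ n ∧
    (∀ p q : Fin n, (p : ℕ) < (q : ℕ) → (q : ℕ) < e → π p < π q) ∧
    (∀ p q : Fin n, e ≤ (p : ℕ) → (p : ℕ) < (q : ℕ) → π q < π p)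

private lemma chain_asc (f : ℕ → ℕ) (a b : ℕ)
    (h : ∀ i, a ≤ i → i + 1 < b → f i < f (i + 1)) :
    ∀ q p, a ≤ p → p < q → q < b → f p < f q := by
  intro q
  induction q with
  | zero => intro p _ hpq _; omega
  | succ q ih =>
    intro p hap hpq hqb
    rcases eq_or_lt_of_le (Nat.lt_succ_iff.mp hpq) with h1 | h1
    · subst h1; exact h p hap hqb
    · exact (ih p hap h1 (by omega)).trans (h q (by omega) hqb)

private lemma chain_desc (f : ℕ → ℕ) (b n : ℕ)
    (h : ∀ i, b ≤ i → i + 1 < n → f (i + 1) < f i) :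
    ∀ q p, b ≤ p → p < q → q < n → f q < f p := by
  intro q
  induction q with
  | zero => intro p _ hpq _; omega
  | succ q ih =>
    intro p hap hpq hqb
    rcases eq_or_lt_of_le (Nat.lt_succ_iff.mp hpq) with h1 | h1
    · subst h1; exact h p hap hqb
    · exact (h q (by omega) hqb).trans (ih p hap h1 (by omega))

/-- an `n`-cycle (`n ≥ 3`) lying in `S^{++-}` that is not unimodal has
exactly two `(+,+,-)`-segmentations. -/
theorem stmt_19 (n : ℕ) (hn : 3 ≤ n) (π : Equiv.Perm (Fin n))
    (hcyc : π.IsCycle ∧ π.support = Finset.univ)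
    (hgrid : ∃ e1 e2, SegPPM π e1 e2)
    (hnotuni : ¬ IsUnimodal π) :
    Set.ncard {p : ℕ × ℕ | SegPPM π p.1 p.2} = 2 := by
  classical
  obtain ⟨e1, e2, hseg0⟩ := hgrid
  set f : ℕ → ℕ := fun i => if h : i < n then ((π ⟨i, h⟩ : Fin n) : ℕ) else 0 with hf
  have key : ∀ (i j : ℕ) (hi : i < n) (hj : j < n),
      (π ⟨i, hi⟩ < π ⟨j, hj⟩ ↔ f i < f j) := by
    intro i j hi hj
    simp only [hf, dif_pos hi, dif_pos hj, Fin.lt_def]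
  have finj : ∀ i j, i < n → j < n → f i = f j → i = j := by
    intro i j hi hj h
    simp only [hf, dif_pos hi, dif_pos hj] at h
    have := π.injective (Fin.val_injective h)
    exact congrArg Fin.val this
  have seg_iff : ∀ a b : ℕ, SegPPM π a b ↔ (a ≤ b ∧ b ≤ n ∧
      (∀ i, i + 1 < a → f i < f (i + 1)) ∧
      (∀ i, a ≤ i → i + 1 < b → f i < f (i + 1)) ∧
      (∀ i, b ≤ i → i + 1 < n → f (i + 1) < f i)) := by
    intro a b
    constructor
    · rintro ⟨h1, h2, h3, h4, h5⟩
      refine ⟨h1, h2, ?_, ?_, ?_⟩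
      · intro i hi
        have hi1 : i + 1 < n := by omega
        exact (key i (i+1) (by omega) hi1).mp (h3 ⟨i, by omega⟩ ⟨i+1, hi1⟩ (by simp) hi)
      · intro i hai hi
        have hi1 : i + 1 < n := by omega
        exact (key i (i+1) (by omega) hi1).mp (h4 ⟨i, by omega⟩ ⟨i+1, hi1⟩ hai (by simp) hi)
      · intro i hbi hi
        exact (key (i+1) i hi (by omega)).mp (h5 ⟨i, by omega⟩ ⟨i+1, hi⟩ hbi (by simp))
    · rintro ⟨h1, h2, h3, h4, h5⟩
      refine ⟨h1, h2, ?_, ?_, ?_⟩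
      · intro p q hpq hq
        exact (key p q p.isLt q.isLt).mpr
          (chain_asc f 0 a (fun i _ => h3 i) q p (Nat.zero_le _) hpq hq)
      · intro p q hap hpq hq
        exact (key p q p.isLt q.isLt).mpr (chain_asc f a b h4 q p hap hpq hq)
      · intro p q hbp hpq
        exact (key q p q.isLt p.isLt).mpr (chain_desc f b n h5 q p hbp hpq q.isLt)
  have uni_of : ∀ e, e ≤ n → (∀ i, i + 1 < e → f i < f (i + 1)) →
      (∀ i, e ≤ i → i + 1 < n → f (i + 1) < f i) → IsUnimodal π := by
    intro e he h1 h2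
    refine ⟨e, he, ?_, ?_⟩
    · intro p q hpq hq
      exact (key p q p.isLt q.isLt).mpr
        (chain_asc f 0 e (fun i _ => h1 i) q p (Nat.zero_le _) hpq hq)
    · intro p q hep hpq
      exact (key q p q.isLt p.isLt).mpr (chain_desc f e n h2 q p hep hpq q.isLt)
  -- Lemma A: any segmentation of a non-unimodal permutation has a descent at a-1
  have lemA : ∀ a b, SegPPM π a b → 0 < a ∧ a < b ∧ f a < f (a - 1) := by
    intro a b hS
    rw [seg_iff] at hS
    obtain ⟨h1, h2, h3, h4, h5⟩ := hS
    by_contra hc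
    push_neg at hc
    refine hnotuni (uni_of b h2 ?_ h5)
    intro i hi
    rcases Nat.lt_trichotomy (i + 1) a with h | h | h
    · exact h3 i h
    · -- i = a - 1
      have ha : 0 < a := by omega
      have hab : a < b := by omega
      have hle : f (a - 1) ≤ f a := hc ha hab
      have hne : f (a - 1) ≠ f a := by
        intro he
        have := finj (a - 1) a (by omega) (by omega) he
        omega
      have : a - 1 + 1 = a := by omega
      rw [show i = a - 1 by omega, this]
      omega
    · exact h4 i (by omega) hi
  rw [seg_iff] at hseg0
  obtain ⟨he12, he2n, hinit, hmid, htail⟩ := hseg0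
  obtain ⟨he1pos, he1lt, hdsc⟩ := lemA e1 e2 (by rw [seg_iff]; exact ⟨he12, he2n, hinit, hmid, htail⟩)
  set d := e1 - 1 with hd
  have hde1 : e1 = d + 1 := by omega
  have hdm_desc : f (d + 1) < f d := hde1 ▸ hdsc
  -- m : start of the final decreasing run
  set P : ℕ → Prop := fun t => ∀ i, t ≤ i → i + 1 < n → f (i + 1) < f i with hP
  have hPn1 : P (n - 1) := by intro i h1 h2; omega
  have hex : ∃ t, P t := ⟨n - 1, hPn1⟩
  set m := Nat.find hex with hm'
  have hm : P m := Nat.find_spec hex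
  have hmle : m ≤ n - 1 := Nat.find_min' hex hPn1
  have h_dm : d + 1 ≤ m := by
    by_contra hcon
    push_neg at hcon
    refine hnotuni (uni_of d (by omega) ?_ ?_)
    · intro i hi; exact hinit i (by omega)
    · intro i hdi hin; exact hm i (by omega) hin
  have hdesc : ∀ i, i + 1 < n → (f (i + 1) < f i ↔ (i = d ∨ m ≤ i)) := by
    intro i hin
    constructor
    · intro hdd
      by_cases h1 : i + 1 < e2
      · left
        rcases Nat.lt_trichotomy (i + 1) e1 with h | h | h
        · exact absurd (hinit i h) (by omega)
        · omega
        · exact absurd (hmid i (by omega) h1) (by omega)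
      · right
        refine Nat.find_min' hex ?_
        intro j hij hjn
        rcases eq_or_lt_of_le hij with h | h
        · subst h; exact hdd
        · exact htail j (by omega) hjn
    · intro h
      rcases h with h | h
      · subst h
        rw [← hde1]
        exact hdsc
      · exact hm i h hin
  have asc_of : ∀ i, i + 1 < n → i ≠ d → i < m → f i < f (i + 1) := by
    intro i hin hne him
    have h1 : ¬ f (i + 1) < f i := by
      rw [hdesc i hin]; omega
    have h2 : f i ≠ f (i + 1) := fun he => by
      have := finj i (i + 1) (by omega) hin he; omega
    omega
  have hdn : d + 1 < n := by omega
  have hmn : m + 1 ≤ n := by omega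
  have hset : {p : ℕ × ℕ | SegPPM π p.1 p.2} = {(d + 1, m), (d + 1, m + 1)} := by
    ext ⟨a, b⟩
    simp only [Set.mem_setOf_eq, Set.mem_insert_iff, Set.mem_singleton_iff, Prod.mk.injEq]
    constructor
    · intro hS
      obtain ⟨ha, hab, hdsc'⟩ := lemA a b hS
      rw [seg_iff] at hS
      obtain ⟨h1, h2, h3, h4, h5⟩ := hS
      have han : a < n := by omega
      have hdesc_a : f (a - 1 + 1) < f (a - 1) := by
        rwa [show a - 1 + 1 = a by omega]
      have : a - 1 = d ∨ m ≤ a - 1 := (hdesc (a - 1) (by omega)).mp hdesc_a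
      have had : a = d + 1 := by
        rcases this with h | h
        · omega
        · -- m ≤ a - 1, so d + 1 < a; d in initial block would be ascent, contradiction
          exfalso
          have hda : d + 1 < a := by omega
          exact absurd (h3 d hda) (by omega)
      have hmb : m ≤ b := by
        refine Nat.find_min' hex ?_
        intro j hbj hjn
        exact h5 j hbj hjn
      have hbm1 : b ≤ m + 1 := by
        by_contra hcon
        push_neg at hcon
        have : f m < f (m + 1) := h4 m (by omega) (by omega)
        have : f (m + 1) < f m := hm m (le_refl m) (by omega)
        omega
      rcases (by omega : b = m ∨ b = m + 1) with h | h
      · exact Or.inl ⟨had, h⟩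
      · exact Or.inr ⟨had, h⟩
    · intro h
      have hbig : ∀ b', d + 1 ≤ b' → b' ≤ n → (∀ i, b' ≤ i → i + 1 < n → f (i + 1) < f i) →
          (∀ i, d + 1 ≤ i → i + 1 < b' → i < m) → SegPPM π (d + 1) b' := by
        intro b' hb1 hb2 htl hmd
        rw [seg_iff]
        refine ⟨hb1, hb2, ?_, ?_, htl⟩
        · intro i hi
          exact asc_of i (by omega) (by omega) (by omega)
        · intro i hdi hib
          exact asc_of i (by omega) (by omega) (hmd i hdi hib)
      rcases h with ⟨ha, hb⟩ | ⟨ha, hb⟩ <;> subst ha <;> subst hb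
      · exact hbig m h_dm (by omega) (fun i him hin => hm i him hin) (fun i _ hib => by omega)
      · exact hbig (m + 1) (by omega) hmn
          (fun i him hin => hm i (by omega) hin) (fun i _ hib => by omega)
  rw [hset]
  exact Set.ncard_pair (by simp)
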